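/- Lemma 2 (odd case): Let m ≥ 3 be an odd natural number. For an m×m positive semidefinite complex matrix ρ define g(ρ) = 1 − (2/(m+1))·Tr(ρ^{(m+1)/2}) − ∑_{i=1}^{(m−1)/2} [ (4i/(m+1)²)·Tr(ρ^i) + ((2m−4i+2)/(m+1)²)·Tr(ρ^{(m+1)/2+i}) ]. Then for any positive semidefinite m×m matrices ρ₁, …, ρ_s and nonnegative reals p₁, …, p_s with ∑_i p_i = 1, g(∑_i p_i ρ_i) ≥ ∑_i p_i g(ρ_i). -/

import Mathlib

open ComplexOrder Matrix


section Aux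
open Finset


-- conjugation by a unitary commutes with powers
lemma conjPow {n : ℕ} (U D : Matrix (Fin n) (Fin n) ℂ)
    (h1 : star U * U = 1) (h2 : U * star U = 1) (k : ℕ) :
    (U * D * star U) ^ k = U * D ^ k * star U := by
  induction k with
  | zero => simpa using h2.symm
  | succ k ih =>
    rw [pow_succ, pow_succ, ih]
    calc U * D ^ k * star U * (U * D * star U)
        = U * D ^ k * ((star U * U) * (D * star U)) := by
          simp only [Matrix.mul_assoc]
      _ = U * (D ^ k * D) * star U := by
          rw [h1, Matrix.one_mul, ← Matrix.mul_assoc, ← Matrix.mul_assoc]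

lemma trace_pow_re {n : ℕ} {A : Matrix (Fin n) (Fin n) ℂ} (hA : A.IsHermitian) (k : ℕ) :
    ((A ^ k).trace).re = ∑ j, (hA.eigenvalues j) ^ k := by
  have h1 : star (hA.eigenvectorUnitary : Matrix (Fin n) (Fin n) ℂ) * hA.eigenvectorUnitary = 1 :=
    Matrix.mem_unitaryGroup_iff'.mp hA.eigenvectorUnitary.2
  have h2 : (hA.eigenvectorUnitary : Matrix (Fin n) (Fin n) ℂ) * star hA.eigenvectorUnitary.1 = 1 :=
    Matrix.mem_unitaryGroup_iff.mp hA.eigenvectorUnitary.2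
  conv_lhs => rw [hA.spectral_theorem, Unitary.conjStarAlgAut_apply]
  rw [conjPow _ _ h1 h2, Matrix.trace_mul_cycle, h1, Matrix.one_mul,
    Matrix.diagonal_pow, Matrix.trace_diagonal]
  simp [← Complex.ofReal_pow]

lemma psd_entry_re {n : ℕ} {N : Matrix (Fin n) (Fin n) ℂ} (hN : N.PosSemidef) (j : Fin n) :
    0 ≤ (N j j).re := by
  have h := hN.dotProduct_mulVec_nonneg (Pi.single j 1)
  have hd : dotProduct (star (Pi.single j 1 : Fin n → ℂ)) (N *ᵥ Pi.single j 1) = N j j := by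
    simp [dotProduct, Pi.single_apply, mulVec, Finset.sum_ite_eq, apply_ite]
  rw [hd] at h
  exact (Complex.le_def.mp h).1

lemma peierls {n : ℕ} {N : Matrix (Fin n) (Fin n) ℂ} (hN : N.PosSemidef) (k : ℕ) :
    ∑ j, ((N j j).re) ^ k ≤ ((N ^ k).trace).re := by
  have hH := hN.1
  set W : Matrix (Fin n) (Fin n) ℂ := (hH.eigenvectorUnitary : Matrix (Fin n) (Fin n) ℂ) with hWdef
  have h1 : star W * W = 1 := Matrix.mem_unitaryGroup_iff'.mp hH.eigenvectorUnitary.2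
  have h2 : W * star W = 1 := Matrix.mem_unitaryGroup_iff.mp hH.eigenvectorUnitary.2
  have hμ : ∀ l, 0 ≤ hH.eigenvalues l := hN.eigenvalues_nonneg
  have hterm : ∀ j l, (W j l * (((hH.eigenvalues l : ℝ) : ℂ)) * star (W j l)).re
      = Complex.normSq (W j l) * hH.eigenvalues l := by
    intro j l
    rw [mul_comm (W j l) _, mul_assoc, Complex.star_def, Complex.mul_conj]
    simp [mul_comm]
  have hdiag : ∀ j, (N j j).re = ∑ l, Complex.normSq (W j l) * hH.eigenvalues l := by
    intro j
    conv_lhs => rw [hH.spectral_theorem, Unitary.conjStarAlgAut_apply]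
    rw [Matrix.mul_apply, Complex.re_sum]
    refine Finset.sum_congr rfl fun l _ => ?_
    rw [Matrix.mul_diagonal, Matrix.star_apply]
    exact hterm j l
  have rows : ∀ j, ∑ l, Complex.normSq (W j l) = 1 := by
    intro j
    have h := congrFun (congrFun h2 j) j
    rw [Matrix.mul_apply] at h
    simp only [Matrix.star_apply, Complex.star_def, Complex.mul_conj, Matrix.one_apply_eq] at h
    exact_mod_cast h
  have cols : ∀ l, ∑ j, Complex.normSq (W j l) = 1 := by
    intro l
    have h := congrFun (congrFun h1 l) l
    rw [Matrix.mul_apply] at h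
    simp only [Matrix.star_apply, Complex.star_def, mul_comm, Complex.mul_conj,
      Matrix.one_apply_eq] at h
    exact_mod_cast h
  calc ∑ j, ((N j j).re) ^ k
      = ∑ j, (∑ l, Complex.normSq (W j l) * hH.eigenvalues l) ^ k := by
        exact Finset.sum_congr rfl fun j _ => by rw [hdiag j]
    _ ≤ ∑ j, ∑ l, Complex.normSq (W j l) * (hH.eigenvalues l) ^ k :=
        Finset.sum_le_sum fun j _ =>
          Real.pow_arith_mean_le_arith_mean_pow Finset.univ _ _
            (fun l _ => Complex.normSq_nonneg _) (rows j) (fun l _ => hμ l) k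
    _ = ∑ l, (∑ j, Complex.normSq (W j l)) * (hH.eigenvalues l) ^ k := by
        rw [Finset.sum_comm]; simp [Finset.sum_mul]
    _ = ∑ l, (hH.eigenvalues l) ^ k := by simp [cols]
    _ = ((N ^ k).trace).re := (trace_pow_re hH k).symm

lemma trace_pow_convex {m s : ℕ} (k : ℕ) (ρ : Fin s → Matrix (Fin m) (Fin m) ℂ)
    (hρ : ∀ i, (ρ i).PosSemidef) (p : Fin s → ℝ) (hp : ∀ i, 0 ≤ p i) (hps : ∑ i, p i = 1) :
    (((∑ i, (p i : ℂ) • ρ i) ^ k).trace).re ≤ ∑ i, p i * (((ρ i) ^ k).trace).re := by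
  set A := ∑ i, (p i : ℂ) • ρ i with hAdef
  have hpsdsmul : ∀ i, ((p i : ℂ) • ρ i).PosSemidef := by
    intro i
    refine Matrix.PosSemidef.of_dotProduct_mulVec_nonneg ?_ fun x => ?_
    · show _ᴴ = _
      rw [Matrix.conjTranspose_smul, (hρ i).1]; simp
    · rw [smul_mulVec, dotProduct_smul, smul_eq_mul]
      exact mul_nonneg (by exact_mod_cast hp i) ((hρ i).dotProduct_mulVec_nonneg x)
  have hA : A.PosSemidef := by
    rw [hAdef]
    exact Finset.sum_induction _ _
      (fun a b ha hb => Matrix.PosSemidef.of_dotProduct_mulVec_nonneg (ha.1.add hb.1) fun x => by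
        rw [Matrix.add_mulVec, dotProduct_add]; exact add_nonneg (ha.dotProduct_mulVec_nonneg x) (hb.dotProduct_mulVec_nonneg x))
      Matrix.PosSemidef.zero (fun i _ => hpsdsmul i)
  set U : Matrix (Fin m) (Fin m) ℂ := (hA.1.eigenvectorUnitary : Matrix (Fin m) (Fin m) ℂ)
    with hU
  have h1 : star U * U = 1 := Matrix.mem_unitaryGroup_iff'.mp hA.1.eigenvectorUnitary.2
  have h2 : U * star U = 1 := Matrix.mem_unitaryGroup_iff.mp hA.1.eigenvectorUnitary.2
  set N : Fin s → Matrix (Fin m) (Fin m) ℂ := fun i => star U * ρ i * U with hNdef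
  have hNpsd : ∀ i, (N i).PosSemidef := fun i => by
    simpa [Matrix.star_eq_conjTranspose, hNdef] using (hρ i).conjTranspose_mul_mul_same U
  have hdiag : star U * A * U = Matrix.diagonal (RCLike.ofReal ∘ hA.1.eigenvalues) :=
    by rw [← hA.1.conjStarAlgAut_star_eigenvectorUnitary, Unitary.conjStarAlgAut_apply,
      Unitary.coe_star, star_star]
  have hsum : star U * A * U = ∑ i, (p i : ℂ) • N i := by
    rw [hAdef, Matrix.mul_sum, Finset.sum_mul]
    exact Finset.sum_congr rfl fun i _ => by rw [Matrix.mul_smul, Matrix.smul_mul]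
  have hlam : ∀ j, hA.1.eigenvalues j = ∑ i, p i * ((N i) j j).re := by
    intro j
    have h := congrFun (congrFun (hdiag.symm.trans hsum) j) j
    rw [Matrix.diagonal_apply_eq] at h
    have h' := congrArg Complex.re h
    simpa [Finset.sum_apply, Matrix.sum_apply, Complex.re_sum, Complex.re_ofReal_mul] using h'
  have jensen : ∀ j, (hA.1.eigenvalues j) ^ k ≤ ∑ i, p i * (((N i) j j).re) ^ k := by
    intro j
    rw [hlam j]
    exact Real.pow_arith_mean_le_arith_mean_pow Finset.univ _ _ (fun i _ => hp i) hps
      (fun i _ => psd_entry_re (hNpsd i) j) k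
  have hNtr : ∀ i, ((N i ^ k).trace) = ((ρ i ^ k).trace) := by
    intro i
    have h := conjPow (star U) (ρ i) (by rwa [star_star]) (by rwa [star_star]) k
    rw [star_star] at h
    rw [show N i = star U * ρ i * U from rfl, h, Matrix.trace_mul_cycle, h2, Matrix.one_mul]
  calc ((A ^ k).trace).re = ∑ j, (hA.1.eigenvalues j) ^ k := trace_pow_re hA.1 k
    _ ≤ ∑ j, ∑ i, p i * (((N i) j j).re) ^ k := Finset.sum_le_sum fun j _ => jensen j
    _ = ∑ i, p i * ∑ j, (((N i) j j).re) ^ k := by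
        rw [Finset.sum_comm]; simp [Finset.mul_sum]
    _ ≤ ∑ i, p i * ((N i ^ k).trace).re := Finset.sum_le_sum fun i _ =>
        mul_le_mul_of_nonneg_left (peierls (hNpsd i) k) (hp i)
    _ = ∑ i, p i * ((ρ i ^ k).trace).re := by simp [hNtr]

end Aux

/-- The function `g` of the paper (odd `m`):
`g(ρ) = 1 − (2/(m+1))·Tr(ρ^{(m+1)/2})
        − ∑_{i=1}^{(m−1)/2} [ (4i/(m+1)²)·Tr(ρ^i)
          + ((2m−4i+2)/(m+1)²)·Tr(ρ^{(m+1)/2+i}) ]`. -/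
noncomputable def gOdd (m : ℕ) (ρ : Matrix (Fin m) (Fin m) ℂ) : ℝ :=
  1 - (2 / ((m : ℝ) + 1)) * ((ρ ^ ((m + 1) / 2)).trace).re
    - ∑ i ∈ Finset.Icc 1 ((m - 1) / 2),
      ((4 * (i : ℝ)) / ((m : ℝ) + 1) ^ 2 * ((ρ ^ i).trace).re +
       (2 * (m : ℝ) - 4 * i + 2) / ((m : ℝ) + 1) ^ 2 *
         ((ρ ^ ((m + 1) / 2 + i)).trace).re)

/-- Lemma 2 (odd case): `g` is concave on convex combinations of positive
semidefinite matrices: `g(∑ pᵢ ρᵢ) ≥ ∑ pᵢ g(ρᵢ)`. -/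
theorem gOdd_concave (m : ℕ) (hm : 3 ≤ m) (hmo : Odd m)
    (s : ℕ) (ρ : Fin s → Matrix (Fin m) (Fin m) ℂ) (hρ : ∀ i, (ρ i).PosSemidef)
    (p : Fin s → ℝ) (hp : ∀ i, 0 ≤ p i) (hps : ∑ i, p i = 1) :
    gOdd m (∑ i, (p i : ℂ) • ρ i) ≥ ∑ i, p i * gOdd m (ρ i) := by
  have key : ∀ k, (((∑ i, (p i : ℂ) • ρ i) ^ k).trace).re
      ≤ ∑ i, p i * (((ρ i) ^ k).trace).re := fun k => trace_pow_convex k ρ hρ p hp hps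
  rw [ge_iff_le]
  have hexp : ∑ i, p i * gOdd m (ρ i)
      = (∑ i, p i)
        - (2 / ((m : ℝ) + 1)) * (∑ i, p i * (((ρ i) ^ ((m + 1) / 2)).trace).re)
        - ∑ j ∈ Finset.Icc 1 ((m - 1) / 2),
            ((4 * (j : ℝ)) / ((m : ℝ) + 1) ^ 2 * (∑ i, p i * (((ρ i) ^ j).trace).re) +
             (2 * (m : ℝ) - 4 * j + 2) / ((m : ℝ) + 1) ^ 2 *
               (∑ i, p i * (((ρ i) ^ ((m + 1) / 2 + j)).trace).re)) := by
    calc ∑ i, p i * gOdd m (ρ i)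
        = ∑ i, (p i
            - (2 / ((m : ℝ) + 1)) * (p i * (((ρ i) ^ ((m + 1) / 2)).trace).re)
            - ∑ j ∈ Finset.Icc 1 ((m - 1) / 2),
                ((4 * (j : ℝ)) / ((m : ℝ) + 1) ^ 2 * (p i * (((ρ i) ^ j).trace).re) +
                 (2 * (m : ℝ) - 4 * j + 2) / ((m : ℝ) + 1) ^ 2 *
                   (p i * (((ρ i) ^ ((m + 1) / 2 + j)).trace).re))) := by
          refine Finset.sum_congr rfl fun i _ => ?_
          simp only [gOdd]
          rw [mul_sub, mul_sub, mul_one, Finset.mul_sum]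
          refine congrArg₂ _ (congrArg₂ _ rfl (by ring)) ?_
          exact Finset.sum_congr rfl fun j _ => by ring
      _ = _ := by
          rw [Finset.sum_sub_distrib, Finset.sum_sub_distrib, Finset.sum_comm, ← Finset.mul_sum]
          congr 1
          exact Finset.sum_congr rfl fun j _ => by
            rw [Finset.sum_add_distrib, ← Finset.mul_sum, ← Finset.mul_sum]
  rw [hexp, hps]
  simp only [gOdd]
  have hc : (0:ℝ) ≤ 2 / ((m : ℝ) + 1) := by positivity
  refine sub_le_sub (sub_le_sub_left (mul_le_mul_of_nonneg_left (key _) hc) 1)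
    (Finset.sum_le_sum fun j hj => ?_)
  have hj2 : j ≤ (m - 1) / 2 := (Finset.mem_Icc.mp hj).2
  have hjm : 2 * j + 1 ≤ m := by omega
  have hjmR : (2 * j + 1 : ℝ) ≤ (m : ℝ) := by exact_mod_cast hjm
  refine add_le_add (mul_le_mul_of_nonneg_left (key _) (by positivity))
    (mul_le_mul_of_nonneg_left (key _) ?_)
  apply div_nonneg _ (by positivity)
  linarith
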